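/- The annotated equality test is dependency-correct: if v₁ ≡_c v₁′ and v₂ ≡_c v₂′ then (v₁ ≈̂ v₂) ≡_c (v₁′ ≈̂ v₂′), where v₁ ≈̂ v₂ returns the boolean (|v₁| = |v₂|) annotated with ‖v₁‖ ∪ ‖v₂‖. -/

import Mathlib

abbrev Color := ℕ

mutual
inductive RVal : Type where
  | int : ℤ → RVal
  | bool : Bool → RVal
  | pair : AVal → AVal → RVal
  | coll : List AVal → RVal
inductive AVal : Type where
  | ann : RVal → Set Color → AVal
end

inductive Val : Type where
  | int : ℤ → Val
  | bool : Bool → Val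
  | pair : Val → Val → Val
  | coll : List Val → Val

mutual
def eraseA : AVal → Val
  | .ann w _ => eraseR w
def eraseR : RVal → Val
  | .int i => .int i
  | .bool b => .bool b
  | .pair v₁ v₂ => .pair (eraseA v₁) (eraseA v₂)
  | .coll vs => .coll (eraseList vs)
def eraseList : List AVal → List Val
  | [] => []
  | v :: vs => eraseA v :: eraseList vs
end

mutual
def colorsA : AVal → Set Color
  | .ann w Φ => Φ ∪ colorsR w
def colorsR : RVal → Set Color
  | .int _ => ∅
  | .bool _ => ∅
  | .pair v₁ v₂ => colorsA v₁ ∪ colorsA v₂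
  | .coll vs => colorsList vs
def colorsList : List AVal → Set Color
  | [] => ∅
  | v :: vs => colorsA v ∪ colorsList vs
end

def substSet (α : Color → Set Color) (Φ : Set Color) : Set Color := ⋃ c ∈ Φ, α c

mutual
def substA (α : Color → Set Color) : AVal → AVal
  | .ann w Φ => .ann (substR α w) (substSet α Φ)
def substR (α : Color → Set Color) : RVal → RVal
  | .int i => .int i
  | .bool b => .bool b
  | .pair v₁ v₂ => .pair (substA α v₁) (substA α v₂)
  | .coll vs => .coll (substList α vs)
def substList (α : Color → Set Color) : List AVal → List AVal
  | [] => []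
  | v :: vs => substA α v :: substList α vs
end

-- Distinctly-colored: every annotation a singleton, no color used twice.
mutual
def DistA : AVal → Prop
  | .ann w Φ => (∃ c, Φ = {c}) ∧ Φ ∩ colorsR w = ∅ ∧ DistR w
def DistR : RVal → Prop
  | .int _ => True
  | .bool _ => True
  | .pair v₁ v₂ => DistA v₁ ∧ DistA v₂ ∧ colorsA v₁ ∩ colorsA v₂ = ∅
  | .coll vs => DistList vs
def DistList : List AVal → Prop
  | [] => True
  | v :: vs => DistA v ∧ DistList vs ∧ colorsA v ∩ colorsList vs = ∅
end

-- "Equal except at c"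
mutual
inductive EqExA (c : Color) : AVal → AVal → Prop where
  | same : ∀ {w₁ w₂ : RVal} {Φ : Set Color}, EqExR c w₁ w₂ → EqExA c (.ann w₁ Φ) (.ann w₂ Φ)
  | escape : ∀ {w₁ w₂ : RVal} {Φ₁ Φ₂ : Set Color}, c ∈ Φ₁ → c ∈ Φ₂ → EqExA c (.ann w₁ Φ₁) (.ann w₂ Φ₂)
inductive EqExR (c : Color) : RVal → RVal → Prop where
  | int : ∀ i : ℤ, EqExR c (.int i) (.int i)
  | bool : ∀ b : Bool, EqExR c (.bool b) (.bool b)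
  | pair : ∀ {v₁ v₂ v₁' v₂' : AVal}, EqExA c v₁ v₁' → EqExA c v₂ v₂' → EqExR c (.pair v₁ v₂) (.pair v₁' v₂')
  | coll : ∀ {vs vs' : List AVal}, EqExL c vs vs' → EqExR c (.coll vs) (.coll vs')
inductive EqExL (c : Color) : List AVal → List AVal → Prop where
  | nil : EqExL c [] []
  | cons : ∀ {v v' : AVal} {vs vs' : List AVal}, EqExA c v v' → EqExL c vs vs' → EqExL c (v :: vs) (v' :: vs')
end

inductive Ty : Type where
  | int : Ty
  | bool : Ty
  | pair : Ty → Ty → Ty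
  | coll : Ty → Ty

inductive HasTy : Val → Ty → Prop where
  | int : ∀ i : ℤ, HasTy (.int i) .int
  | bool : ∀ b : Bool, HasTy (.bool b) .bool
  | pair : ∀ {v₁ v₂ t₁ t₂}, HasTy v₁ t₁ → HasTy v₂ t₂ → HasTy (.pair v₁ v₂) (.pair t₁ t₂)
  | coll : ∀ {vs t}, (∀ v ∈ vs, HasTy v t) → HasTy (.coll vs) (.coll t)

/-- v is an annotated value of (ordinary) type τ. -/
def ATyped (v : AVal) (t : Ty) : Prop := HasTy (eraseA v) t

/-- Add an annotation set to the top-level annotation. -/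
def addTop (v : AVal) (Φ : Set Color) : AVal :=
  match v with
  | .ann w Ψ => .ann w (Ψ ∪ Φ)

/- Annotated types -/
mutual
inductive ATy : Type where
  | ann : RTy → Set Color → ATy
inductive RTy : Type where
  | int : RTy
  | bool : RTy
  | pair : ATy → ATy → RTy
  | coll : ATy → RTy
end

mutual
def teraseA : ATy → Ty
  | .ann w _ => teraseR w
def teraseR : RTy → Ty
  | .int => .int
  | .bool => .bool
  | .pair t₁ t₂ => .pair (teraseA t₁) (teraseA t₂)
  | .coll t => .coll (teraseA t)
end

mutual
def tcolorsA : ATy → Set Color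
  | .ann w Φ => Φ ∪ tcolorsR w
def tcolorsR : RTy → Set Color
  | .int => ∅
  | .bool => ∅
  | .pair t₁ t₂ => tcolorsA t₁ ∪ tcolorsA t₂
  | .coll t => tcolorsA t
end

mutual
def mergeA : ATy → ATy → ATy
  | .ann w₁ Φ₁, .ann w₂ Φ₂ => .ann (mergeR w₁ w₂) (Φ₁ ∪ Φ₂)
def mergeR : RTy → RTy → RTy
  | .int, .int => .int
  | .bool, .bool => .bool
  | .pair a b, .pair a' b' => .pair (mergeA a a') (mergeA b b')
  | .coll a, .coll a' => .coll (mergeA a a')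
  | w, _ => w
end

-- Semantics of annotated types: v ∈ A[τ̂].
mutual
def memA : AVal → ATy → Prop
  | .ann w Ψ, .ann ω Φ => Ψ ⊆ Φ ∧ memR w ω
def memR : RVal → RTy → Prop
  | .int _, .int => True
  | .bool _, .bool => True
  | .pair v₁ v₂, .pair t₁ t₂ => memA v₁ t₁ ∧ memA v₂ t₂
  | .coll vs, .coll t => memList vs t
  | _, _ => False
def memList : List AVal → ATy → Prop
  | [], _ => True
  | v :: vs, t => memA v t ∧ memList vs t
end


open Classical in
noncomputable def hEqTest (v₁ v₂ : AVal) : AVal :=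
  .ann (.bool (decide (eraseA v₁ = eraseA v₂))) (colorsA v₁ ∪ colorsA v₂)

/-! If `c` colours one of the compared values, it colours the test's result on both sides and the
`escape` clause applies; otherwise `c` occurs nowhere in the arguments, which are then unchanged. -/

mutual
theorem EqExA.mem_colorsA_iff {c : Color} :
    ∀ {v v' : AVal}, EqExA c v v' → (c ∈ colorsA v ↔ c ∈ colorsA v')
  | _, _, .same h => or_congr Iff.rfl h.mem_colorsR_iff
  | _, _, .escape h₁ h₂ => iff_of_true (Or.inl h₁) (Or.inl h₂)
theorem EqExR.mem_colorsR_iff {c : Color} :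
    ∀ {w w' : RVal}, EqExR c w w' → (c ∈ colorsR w ↔ c ∈ colorsR w')
  | _, _, .int _ => Iff.rfl
  | _, _, .bool _ => Iff.rfl
  | _, _, .pair h₁ h₂ => or_congr h₁.mem_colorsA_iff h₂.mem_colorsA_iff
  | _, _, .coll h => h.mem_colorsList_iff
theorem EqExL.mem_colorsList_iff {c : Color} :
    ∀ {vs vs' : List AVal}, EqExL c vs vs' → (c ∈ colorsList vs ↔ c ∈ colorsList vs')
  | _, _, .nil => Iff.rfl
  | _, _, .cons h hs => or_congr h.mem_colorsA_iff hs.mem_colorsList_iff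
end

mutual
theorem EqExA.eq_of_notMem_colorsA {c : Color} :
    ∀ {v v' : AVal}, EqExA c v v' → c ∉ colorsA v → v = v'
  | _, _, .same h, hc => by rw [h.eq_of_notMem_colorsR fun hm => hc (Or.inr hm)]
  | _, _, .escape h₁ _, hc => absurd (Or.inl h₁) hc
theorem EqExR.eq_of_notMem_colorsR {c : Color} :
    ∀ {w w' : RVal}, EqExR c w w' → c ∉ colorsR w → w = w'
  | _, _, .int _, _ => rfl
  | _, _, .bool _, _ => rfl
  | _, _, .pair h₁ h₂, hc => by
      rw [h₁.eq_of_notMem_colorsA fun hm => hc (Or.inl hm),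
        h₂.eq_of_notMem_colorsA fun hm => hc (Or.inr hm)]
  | _, _, .coll h, hc => by rw [h.eq_of_notMem_colorsList hc]
theorem EqExL.eq_of_notMem_colorsList {c : Color} :
    ∀ {vs vs' : List AVal}, EqExL c vs vs' → c ∉ colorsList vs → vs = vs'
  | _, _, .nil, _ => rfl
  | _, _, .cons h hs, hc => by
      rw [h.eq_of_notMem_colorsA fun hm => hc (Or.inl hm),
        hs.eq_of_notMem_colorsList fun hm => hc (Or.inr hm)]
end

theorem hEqTest_dependency_correct (c : Color) (v₁ v₂ v₁' v₂' : AVal)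
    (h₁ : EqExA c v₁ v₁') (h₂ : EqExA c v₂ v₂') :
    EqExA c (hEqTest v₁ v₂) (hEqTest v₁' v₂') := by
  by_cases hc : c ∈ colorsA v₁ ∪ colorsA v₂
  · refine .escape hc ?_
    simpa only [Set.mem_union, h₁.mem_colorsA_iff, h₂.mem_colorsA_iff] using hc
  · rw [Set.mem_union, not_or] at hc
    rw [← h₁.eq_of_notMem_colorsA hc.1, ← h₂.eq_of_notMem_colorsA hc.2]
    exact .same (.bool _)
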